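/- Let g be a Lie algebra over a field of characteristic different from 2, and define L_x : g → g by L_x(y) = (1/2)⁅x,y⁆. Then for all x,y,z ∈ g one has L_x(L_y(z)) − L_y(L_x(z)) − L_⁅x,y⁆(z) = −(1/4)⁅⁅x,y⁆,z⁆. Consequently, the curvature L_x ∘ L_y − L_y ∘ L_x − L_⁅x,y⁆ vanishes for all x,y ∈ g if and only if ⁅⁅x,y⁆,z⁆ = 0 for all x,y,z ∈ g, i.e. g is nilpotent of class at most 2. (Aubert–Medina: a bi-invariant pseudo-metric on a Lie group is flat if and only if the group is 2-nilpotent.) -/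
import Mathlib


/-- **Aubert–Medina.** For `L_x(y) = (1/2)⁅x,y⁆` on a Lie algebra over a field of
characteristic ≠ 2, the curvature equals `−(1/4)⁅⁅x,y⁆,z⁆`; consequently it
vanishes iff the Lie algebra is nilpotent of class at most 2. -/
theorem biinvariant_curvature_formula
    (k : Type*) [Field k] (hk : (2 : k) ≠ 0)
    (g : Type*) [LieRing g] [LieAlgebra k g] :
    (∀ x y z : g,
        (1/2 : k) • ⁅x, (1/2 : k) • ⁅y, z⁆⁆ - (1/2 : k) • ⁅y, (1/2 : k) • ⁅x, z⁆⁆ -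
          (1/2 : k) • ⁅⁅x, y⁆, z⁆ = -((1/4 : k) • ⁅⁅x, y⁆, z⁆)) ∧
    ((∀ x y z : g,
        (1/2 : k) • ⁅x, (1/2 : k) • ⁅y, z⁆⁆ - (1/2 : k) • ⁅y, (1/2 : k) • ⁅x, z⁆⁆ -
          (1/2 : k) • ⁅⁅x, y⁆, z⁆ = 0) ↔
      (∀ x y z : g, ⁅⁅x, y⁆, z⁆ = (0 : g))) := by
  have hfour : (4 : k) ≠ 0 := by
    have : (4 : k) = 2 * 2 := by norm_num
    rw [this]; exact mul_ne_zero hk hk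
  have key : ∀ x y z : g,
      (1/2 : k) • ⁅x, (1/2 : k) • ⁅y, z⁆⁆ - (1/2 : k) • ⁅y, (1/2 : k) • ⁅x, z⁆⁆ -
        (1/2 : k) • ⁅⁅x, y⁆, z⁆ = -((1/4 : k) • ⁅⁅x, y⁆, z⁆) := by
    intro x y z
    have h : ⁅x, ⁅y, z⁆⁆ = ⁅⁅x, y⁆, z⁆ + ⁅y, ⁅x, z⁆⁆ := leibniz_lie x y z
    simp only [lie_smul, smul_smul, h]
    match_scalars <;> field_simp [hfour] <;> ring
  have h4 : (1/4 : k) ≠ 0 := by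
    simpa using hfour
  refine ⟨key, ?_, ?_⟩
  · intro h x y z
    have := (key x y z).symm.trans (h x y z)
    have := neg_eq_zero.mp this
    rcases smul_eq_zero.mp this with h' | h'
    · exact absurd h' h4
    · exact h'
  · intro h x y z
    rw [key, h, smul_zero, neg_zero]
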